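/- arXiv:2311.11042 — 2 statements merged into one kernel-verified Lean document; each statement's English description precedes it below -/
import Mathlib

section
/- Let 𝒫 ⊂ ℝ^m be a lattice polytope of dimension d ≥ 2 such that the relative interior of 𝒫 contains a lattice point. Then rdeg y ≤ d − 1 for all y ∈ M*(𝒫). -/
open Set

noncomputable section

/-- Lift a point of `ℝ^m` to height 1 in `ℝ^(m+1)`. -/
def lift {m : ℕ} (x : Fin m → ℝ) : Fin (m + 1) → ℝ := Fin.snoc x 1

/-- A point with integer coordinates (a lattice point). -/
def isLat {n : ℕ} (x : Fin n → ℝ) : Prop := ∀ i, ∃ z : ℤ, x i = (z : ℝ)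

/-- The cone `C(P)` generated by `P × {1}` (for convex `P`). -/
def coneOf {m : ℕ} (P : Set (Fin m → ℝ)) : Set (Fin (m + 1) → ℝ) :=
  {y | ∃ (c : ℝ) (p : Fin m → ℝ), 0 ≤ c ∧ p ∈ P ∧ y = c • lift p}

/-- The semigroup `M(P)` generated by the lattice points of `P × {1}`. -/
def Msemi {m : ℕ} (P : Set (Fin m → ℝ)) : AddSubmonoid (Fin (m + 1) → ℝ) :=
  AddSubmonoid.closure {y | ∃ p ∈ P, isLat p ∧ y = lift p}

/-- `M*(P)`: the lattice points in the relative interior of `C(P)`. -/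
def Mstar {m : ℕ} (P : Set (Fin m → ℝ)) : Set (Fin (m + 1) → ℝ) :=
  {y | y ∈ intrinsicInterior ℝ (coneOf P) ∧ isLat y}

/-- The degree: the last coordinate. -/
def deg {m : ℕ} (y : Fin (m + 1) → ℝ) : ℝ := y (Fin.last m)

/-- The reduced `P`-degree of `y`. -/
def rdeg {m : ℕ} (P : Set (Fin m → ℝ)) (y : Fin (m + 1) → ℝ) : ℝ :=
  sInf {r | ∃ z w, z ∈ Mstar P ∧ w ∈ Msemi P ∧ y = z + w ∧ r = deg z}

/-- An empty lattice simplex: its only lattice points are its vertices. -/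
def IsEmptyLatticeSimplex {m : ℕ} (s : Set (Fin m → ℝ)) : Prop :=
  ∃ (k : ℕ) (x : Fin (k + 1) → (Fin m → ℝ)), AffineIndependent ℝ x ∧
    (∀ i, isLat (x i)) ∧ s = convexHull ℝ (Set.range x) ∧
    (∀ p ∈ s, isLat p → p ∈ Set.range x)

/-- A lattice triangulation of `P`: a finite face-closed family of empty lattice
simplices covering `P`, with pairwise disjoint relative interiors (every point of `P`
lies in the relative interior of exactly one simplex), and using every lattice point
of `P` as a vertex. -/
structure IsLatticeTriangulation {m : ℕ} (P : Set (Fin m → ℝ))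
    (T : Set (Set (Fin m → ℝ))) : Prop where
  finite : T.Finite
  simplex : ∀ s ∈ T, IsEmptyLatticeSimplex s
  subset : ∀ s ∈ T, s ⊆ P
  partition : ∀ p ∈ P, ∃! s, s ∈ T ∧ p ∈ intrinsicInterior ℝ s
  vertex : ∀ p ∈ P, isLat p → {p} ∈ T

/-!
Fix a lattice point `q` in the relative interior of `P`. It suffices that every `y ∈ M*(P)` of
degree `≥ d` admits a lattice point `a ∈ P` with `y - (a, 1) ∈ M*(P)`: peeling off such points
lowers the degree to at most `d - 1`.

Pushing the weight of `(q, 1)` as far as the cone allows and applying Carathéodory to the rest,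
`y = ∑ cᵢ (vᵢ, 1)` with `v₀ = q`, lattice points `vᵢ ∈ P` whose lifts are linearly independent
(so `n ≤ d`), and `c₀ > 0`. If `c₀ > 1` or `cᵢ ≥ 1` for some `i ≥ 1`, subtracting `(vᵢ, 1)` leaves
a positive weight on the relative interior point `v₀`, hence a point of the relative interior of
the cone. Otherwise `d ≤ deg y = ∑ cᵢ < n + 1` forces `deg y = n = d ≥ 2`, and
`∑ (1 - cᵢ) (vᵢ, 1) = (p, 1)` for a lattice point `p` of the simplex `conv vᵢ`. Exchanging a
suitable vertex for `p` gives a representation of the same kind over a simplex with fewer lattice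
points, so the process terminates.
-/

open Filter Topology

section IntrinsicInterior

variable {E : Type*} [AddCommGroup E] [Module ℝ E] [TopologicalSpace E]

theorem mem_intrinsicInterior_iff_eventually {s : Set E} {x : E} :
    x ∈ intrinsicInterior ℝ s ↔
      x ∈ affineSpan ℝ s ∧ ∀ᶠ u in 𝓝[affineSpan ℝ s] x, u ∈ s := by
  rw [mem_intrinsicInterior]
  constructor
  · rintro ⟨x, hx, rfl⟩
    rw [mem_interior_iff_mem_nhds, mem_nhds_subtype_iff_nhdsWithin] at hx
    erw [Subtype.image_preimage_coe] at hx
    exact ⟨x.2, mem_of_superset hx inter_subset_right⟩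
  · rintro ⟨hxA, hx⟩
    refine ⟨⟨x, hxA⟩, ?_, rfl⟩
    rw [mem_interior_iff_mem_nhds, mem_nhds_subtype_iff_nhdsWithin]
    erw [Subtype.image_preimage_coe]
    exact inter_mem self_mem_nhdsWithin hx

variable [IsTopologicalAddGroup E] [ContinuousSMul ℝ E]

theorem smul_add_mem_intrinsicInterior {s : Set E} {x z : E} {a : ℝ}
    (hx : x ∈ intrinsicInterior ℝ s) (ha : 0 < a) (hs : ∀ u ∈ s, a • u + z ∈ s) :
    a • x + z ∈ intrinsicInterior ℝ s := by
  have hxs : x ∈ s := intrinsicInterior_subset hx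
  rw [mem_intrinsicInterior_iff_eventually] at hx ⊢
  obtain ⟨hxA, hx⟩ := hx
  have hyA : a • x + z ∈ affineSpan ℝ s := subset_affineSpan ℝ s (hs x hxs)
  have hg : Tendsto (fun u => a⁻¹ • (u - z)) (𝓝[affineSpan ℝ s] (a • x + z))
      (𝓝[affineSpan ℝ s] x) := by
    refine tendsto_nhdsWithin_iff.2 ⟨?_, eventually_nhdsWithin_of_forall fun u hu => ?_⟩
    · have hc : Continuous fun u : E => a⁻¹ • (u - z) := by fun_prop
      simpa [smul_smul, inv_mul_cancel₀ ha.ne'] using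
        (hc.tendsto (a • x + z)).mono_left nhdsWithin_le_nhds
    · have := (affineSpan ℝ s).smul_vsub_vadd_mem a⁻¹ hu hyA hxA
      have key : a⁻¹ • (u -ᵥ (a • x + z)) +ᵥ x = a⁻¹ • (u - z) := by
        rw [vsub_eq_sub, vadd_eq_add, smul_sub, smul_sub, smul_add, smul_smul,
          inv_mul_cancel₀ ha.ne', one_smul]
        abel
      rwa [key] at this
  refine ⟨hyA, (hg.eventually hx).mono fun u hu => ?_⟩
  simpa [smul_smul, mul_inv_cancel₀ ha.ne'] using hs _ hu

theorem Convex.sum_mem_intrinsicInterior {s : Set E} (hs : Convex ℝ s) {n : ℕ}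
    {w : Fin (n + 1) → ℝ} {z : Fin (n + 1) → E} (hw₀ : ∀ i, 0 ≤ w i) (hw₁ : ∑ i, w i = 1)
    (hw : 0 < w 0) (hz₀ : z 0 ∈ intrinsicInterior ℝ s) (hz : ∀ i, z i ∈ s) :
    ∑ i, w i • z i ∈ intrinsicInterior ℝ s := by
  rw [Fin.sum_univ_succ]
  refine smul_add_mem_intrinsicInterior hz₀ hw fun u hu => ?_
  simpa [Fin.sum_univ_succ] using hs.sum_mem (t := Finset.univ) (w := w)
    (z := Fin.cons u fun i => z i.succ) (fun i _ => hw₀ i) hw₁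
    (fun i _ => Fin.cases hu (fun i => hz _) i)

theorem eventually_add_smul_mem_of_mem_intrinsicInterior {s : Set E} {x v : E}
    (hx : x ∈ intrinsicInterior ℝ s) (hv : v ∈ (affineSpan ℝ s).direction) :
    ∀ᶠ t in 𝓝 (0 : ℝ), x + t • v ∈ s := by
  rw [mem_intrinsicInterior_iff_eventually] at hx
  refine Tendsto.eventually (f := fun t : ℝ => x + t • v) ?_ hx.2
  refine tendsto_nhdsWithin_iff.2 ⟨?_, Eventually.of_forall fun t => ?_⟩
  · simpa using (Continuous.tendsto (by fun_prop) (0 : ℝ) : Tendsto (fun t : ℝ => x + t • v) _ _)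
  · simpa [add_comm] using AffineSubspace.vadd_mem_of_mem_direction
      ((affineSpan ℝ s).direction.smul_mem t hv) hx.1

end IntrinsicInterior

section Lift

variable {m : ℕ}

@[simp] lemma deg_lift (p : Fin m → ℝ) : deg (lift p) = 1 := by simp [deg, lift]

@[simp] lemma init_lift (p : Fin m → ℝ) : Fin.init (lift p) = p := Fin.init_snoc _ _

@[simp] lemma deg_zero : deg (0 : Fin (m + 1) → ℝ) = 0 := rfl

@[simp] lemma init_zero : Fin.init (0 : Fin (m + 1) → ℝ) = 0 := rfl

@[simp] lemma deg_add (x y : Fin (m + 1) → ℝ) : deg (x + y) = deg x + deg y := rfl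

@[simp] lemma deg_sub (x y : Fin (m + 1) → ℝ) : deg (x - y) = deg x - deg y := rfl

@[simp] lemma deg_smul (c : ℝ) (x : Fin (m + 1) → ℝ) : deg (c • x) = c * deg x := rfl

@[simp] lemma deg_sum {ι : Type*} (s : Finset ι) (x : ι → Fin (m + 1) → ℝ) :
    deg (∑ i ∈ s, x i) = ∑ i ∈ s, deg (x i) := by
  simp [deg, Finset.sum_apply]

@[simp] lemma init_smul (c : ℝ) (x : Fin (m + 1) → ℝ) : Fin.init (c • x) = c • Fin.init x := rfl

@[simp] lemma init_sum {ι : Type*} (s : Finset ι) (x : ι → Fin (m + 1) → ℝ) :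
    Fin.init (∑ i ∈ s, x i) = ∑ i ∈ s, Fin.init (x i) := by
  ext j; simp [Fin.init, Finset.sum_apply]

lemma eq_of_deg_eq_of_init_eq {x y : Fin (m + 1) → ℝ} (hdeg : deg x = deg y)
    (hinit : Fin.init x = Fin.init y) : x = y := by
  rw [← Fin.snoc_init_self x, ← Fin.snoc_init_self y, hinit]
  exact congrArg _ hdeg

lemma lift_sum_smul {ι : Type*} {s : Finset ι} {w : ι → ℝ} (hw : ∑ i ∈ s, w i = 1)
    (v : ι → Fin m → ℝ) : lift (∑ i ∈ s, w i • v i) = ∑ i ∈ s, w i • lift (v i) :=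
  eq_of_deg_eq_of_init_eq (by simp [hw]) (by simp)

end Lift

def latticeAddSubgroup (n : ℕ) : AddSubgroup (Fin n → ℝ) where
  carrier := {x | isLat x}
  add_mem' {x y} hx hy i := by
    obtain ⟨a, ha⟩ := hx i
    obtain ⟨b, hb⟩ := hy i
    exact ⟨a + b, by simp [ha, hb]⟩
  zero_mem' _ := ⟨0, by simp⟩
  neg_mem' {x} hx i := by
    obtain ⟨a, ha⟩ := hx i
    exact ⟨-a, by simp [ha]⟩

section Lattice

variable {m : ℕ}

lemma isLat_lift {p : Fin m → ℝ} (hp : isLat p) : isLat (lift p) :=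
  Fin.lastCases ⟨1, by simp [lift]⟩ fun i => by simpa [lift] using hp i

lemma isLat_init {x : Fin (m + 1) → ℝ} (hx : isLat x) : isLat (Fin.init x) :=
  fun i => hx i.castSucc

lemma Bornology.IsBounded.finite_setOf_isLat {s : Set (Fin m → ℝ)} (hs : Bornology.IsBounded s) :
    {x | x ∈ s ∧ isLat x}.Finite := by
  obtain ⟨R, hR⟩ := isBounded_iff_forall_norm_le.1 hs
  refine (Set.Finite.pi fun _ => (Set.finite_Icc (-⌈R⌉) ⌈R⌉).image (Int.cast : ℤ → ℝ)).subset ?_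
  rintro x ⟨hxs, hx⟩ i -
  obtain ⟨z, hz⟩ := hx i
  have hzR : |(z : ℝ)| ≤ ⌈R⌉ := by
    rw [← hz, ← Real.norm_eq_abs]
    exact (norm_le_pi_norm x i).trans ((hR x hxs).trans (Int.le_ceil R))
  rw [abs_le] at hzR
  exact ⟨z, ⟨by exact_mod_cast hzR.1, by exact_mod_cast hzR.2⟩, hz.symm⟩

end Lattice

section Cone

variable {m : ℕ} {P : Set (Fin m → ℝ)}

lemma continuous_lift : Continuous (lift : (Fin m → ℝ) → Fin (m + 1) → ℝ) :=
  Continuous.finSnoc (A := fun _ => ℝ) continuous_id continuous_const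

lemma smul_lift_mem_coneOf {c : ℝ} {p : Fin m → ℝ} (hc : 0 ≤ c) (hp : p ∈ P) :
    c • lift p ∈ coneOf P :=
  ⟨c, p, hc, hp, rfl⟩

lemma lift_mem_coneOf {p : Fin m → ℝ} (hp : p ∈ P) : lift p ∈ coneOf P := by
  simpa using smul_lift_mem_coneOf zero_le_one hp

lemma deg_nonneg_of_mem_coneOf {x : Fin (m + 1) → ℝ} (hx : x ∈ coneOf P) : 0 ≤ deg x := by
  obtain ⟨c, p, hc, -, rfl⟩ := hx
  simpa using hc

lemma sum_smul_lift_mem_coneOf {ι : Type*} [Fintype ι] (hP : Convex ℝ P) (hne : P.Nonempty)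
    {c : ι → ℝ} {v : ι → Fin m → ℝ} (hc : ∀ i, 0 ≤ c i) (hv : ∀ i, v i ∈ P) :
    ∑ i, c i • lift (v i) ∈ coneOf P := by
  obtain ⟨p, hp⟩ := hne
  rcases (Finset.sum_nonneg fun i _ => hc i).eq_or_lt with h0 | hpos
  · have hc0 : ∀ i, c i = 0 := fun i =>
      (Finset.sum_eq_zero_iff_of_nonneg fun i _ => hc i).1 h0.symm i (Finset.mem_univ _)
    simpa [hc0] using smul_lift_mem_coneOf le_rfl hp
  · have hw : ∑ i, c i / ∑ j, c j = 1 := by rw [← Finset.sum_div, div_self hpos.ne']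
    refine ⟨∑ i, c i, ∑ i, (c i / ∑ j, c j) • v i, hpos.le,
      hP.sum_mem (fun i _ => div_nonneg (hc i) hpos.le) hw fun i _ => hv i, ?_⟩
    rw [lift_sum_smul hw, Finset.smul_sum]
    simp [smul_smul, mul_div_cancel₀ _ hpos.ne']

lemma isCompact_setOf_mem_coneOf_deg_le (hP : IsCompact P) (R : ℝ) :
    IsCompact {x | x ∈ coneOf P ∧ deg x ≤ R} := by
  have : {x | x ∈ coneOf P ∧ deg x ≤ R} =
      (fun cp : ℝ × (Fin m → ℝ) => cp.1 • lift cp.2) '' (Icc 0 R ×ˢ P) := by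
    ext x
    constructor
    · rintro ⟨⟨c, p, hc, hp, rfl⟩, hR⟩
      exact ⟨(c, p), ⟨⟨hc, by simpa using hR⟩, hp⟩, rfl⟩
    · rintro ⟨⟨c, p⟩, ⟨⟨hc, hcR⟩, hp⟩, rfl⟩
      exact ⟨smul_lift_mem_coneOf hc hp, by simpa using hcR⟩
  rw [this]
  exact (isCompact_Icc.prod hP).image (continuous_fst.smul (continuous_lift.comp continuous_snd))

lemma inv_deg_smul_init_mem_affineSpan {p₀ : Fin m → ℝ} (hp₀ : p₀ ∈ P)
    {x : Fin (m + 1) → ℝ} (hx : x ∈ affineSpan ℝ (coneOf P)) (hdeg : deg x ≠ 0) :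
    (deg x)⁻¹ • Fin.init x ∈ affineSpan ℝ P := by
  let L : (Fin (m + 1) → ℝ) →ₗ[ℝ] Fin m → ℝ :=
    LinearMap.funLeft ℝ ℝ Fin.castSucc - (LinearMap.proj (Fin.last m)).smulRight p₀
  have hL : ∀ x, L x = Fin.init x - deg x • p₀ := fun x => rfl
  have hC : affineSpan ℝ (coneOf P) ≤ ((affineSpan ℝ P).direction.comap L).toAffineSubspace := by
    refine affineSpan_le.2 ?_
    rintro _ ⟨c, p, -, hp, rfl⟩
    rw [SetLike.mem_coe, Submodule.mem_toAffineSubspace, Submodule.mem_comap, hL, deg_smul,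
      deg_lift, mul_one, init_smul, init_lift, ← smul_sub, direction_affineSpan]
    exact Submodule.smul_mem _ c (vsub_mem_vectorSpan ℝ hp hp₀)
  have hxL : L x ∈ (affineSpan ℝ P).direction := hC hx
  have : (deg x)⁻¹ • Fin.init x = (deg x)⁻¹ • L x +ᵥ p₀ := by
    rw [hL, vadd_eq_add, smul_sub, smul_smul, inv_mul_cancel₀ hdeg, one_smul, sub_add_cancel]
  rw [this]
  exact AffineSubspace.vadd_mem_of_mem_direction (Submodule.smul_mem _ _ hxL)
    (subset_affineSpan ℝ P hp₀)

lemma lift_mem_intrinsicInterior_coneOf {p : Fin m → ℝ} (hp : p ∈ intrinsicInterior ℝ P) :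
    lift p ∈ intrinsicInterior ℝ (coneOf P) := by
  have hpP := intrinsicInterior_subset hp
  rw [mem_intrinsicInterior_iff_eventually] at hp ⊢
  refine ⟨subset_affineSpan ℝ _ (lift_mem_coneOf hpP), ?_⟩
  have hdeg : ∀ᶠ x in 𝓝 (lift p), 0 < deg x :=
    ((continuous_apply (Fin.last m)).tendsto (lift p)).eventually_const_lt (by simp [lift])
  let φ : (Fin (m + 1) → ℝ) → Fin m → ℝ := fun x => (deg x)⁻¹ • Fin.init x
  have hφ : Tendsto φ (𝓝[affineSpan ℝ (coneOf P)] (lift p)) (𝓝[affineSpan ℝ P] p) := by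
    refine tendsto_nhdsWithin_iff.2 ⟨?_, ?_⟩
    · have hcont : ContinuousAt φ (lift p) :=
        (((continuous_apply (Fin.last m)).continuousAt).inv₀ (by simp [lift])).smul
          (continuous_pi fun i => continuous_apply i.castSucc).continuousAt
      simpa [φ] using hcont.tendsto.mono_left nhdsWithin_le_nhds
    · filter_upwards [self_mem_nhdsWithin, hdeg.filter_mono nhdsWithin_le_nhds] with x hx hx0
      exact inv_deg_smul_init_mem_affineSpan hpP hx hx0.ne'
  filter_upwards [hφ.eventually hp.2, hdeg.filter_mono nhdsWithin_le_nhds] with x hx hx0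
  have : x = deg x • lift (φ x) :=
    eq_of_deg_eq_of_init_eq (by simp) (by simp [φ, smul_smul, mul_inv_cancel₀ hx0.ne'])
  rw [this]
  exact smul_lift_mem_coneOf hx0.le hx

lemma sum_smul_lift_mem_intrinsicInterior_coneOf (hP : Convex ℝ P) {n : ℕ}
    {v : Fin (n + 1) → Fin m → ℝ} {c : Fin (n + 1) → ℝ} (hv₀ : v 0 ∈ intrinsicInterior ℝ P)
    (hv : ∀ i, v i ∈ P) (hc₀ : 0 < c 0) (hc : ∀ i, 0 ≤ c i) :
    ∑ i, c i • lift (v i) ∈ intrinsicInterior ℝ (coneOf P) := by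
  rw [Fin.sum_univ_succ]
  refine smul_add_mem_intrinsicInterior (lift_mem_intrinsicInterior_coneOf hv₀) hc₀ ?_
  rintro _ ⟨a, p, ha, hp, rfl⟩
  simpa [Fin.sum_univ_succ, smul_smul] using sum_smul_lift_mem_coneOf hP ⟨p, hp⟩
    (c := Fin.cons (c 0 * a) fun i => c i.succ) (v := Fin.cons p fun i => v i.succ)
    (Fin.cases (mul_nonneg hc₀.le ha) fun i => hc _) (Fin.cases hp fun i => hv _)

end Cone

section Caratheodory

variable {m : ℕ} {P : Set (Fin m → ℝ)}

lemma linearIndependent_lift_iff {ι : Type*} {v : ι → Fin m → ℝ} :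
    LinearIndependent ℝ (lift ∘ v) ↔ AffineIndependent ℝ v := by
  rw [linearIndependent_iff', affineIndependent_iff]
  refine forall₂_congr fun s g => ?_
  have key : ∑ i ∈ s, g i • (lift ∘ v) i = 0 ↔ ∑ i ∈ s, g i = 0 ∧ ∑ i ∈ s, g i • v i = 0 := by
    constructor
    · intro h
      exact ⟨by simpa using congrArg deg h, by simpa using congrArg Fin.init h⟩
    · rintro ⟨h₁, h₂⟩
      exact eq_of_deg_eq_of_init_eq (by simpa using h₁) (by simpa using h₂)
  rw [key, and_imp]

lemma exists_linearIndependent_of_mem_coneOf_convexHull {V : Set (Fin m → ℝ)}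
    {x : Fin (m + 1) → ℝ} (hx : x ∈ coneOf (convexHull ℝ V)) :
    ∃ (n : ℕ) (z : Fin n → Fin m → ℝ) (κ : Fin n → ℝ), (∀ i, z i ∈ V) ∧
      LinearIndependent ℝ (lift ∘ z) ∧ (∀ i, 0 < κ i) ∧ x = ∑ i, κ i • lift (z i) := by
  obtain ⟨c, r, hc, hr, rfl⟩ := hx
  rcases hc.eq_or_lt with rfl | hc
  · exact ⟨0, Fin.elim0, Fin.elim0, fun i => i.elim0, linearIndependent_empty_type,
      fun i => i.elim0, by simp⟩
  obtain ⟨ι, _, z, w, hzV, hz, hw, hw₁, rfl⟩ := eq_pos_convex_span_of_mem_convexHull hr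
  let e := Fintype.equivFin ι
  refine ⟨Fintype.card ι, z ∘ e.symm, fun i => c * w (e.symm i), fun i => hzV ⟨_, rfl⟩,
    linearIndependent_lift_iff.2 (hz.comp_embedding e.symm.toEmbedding),
    fun i => mul_pos hc (hw _), ?_⟩
  rw [lift_sum_smul hw₁, Finset.smul_sum, ← e.symm.sum_comp]
  simp [smul_smul]

lemma exists_max_sub_smul_lift_mem_coneOf (hP : IsCompact P) {q : Fin m → ℝ} (hq : q ∈ P)
    {y : Fin (m + 1) → ℝ} (hy : y ∈ intrinsicInterior ℝ (coneOf P)) :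
    ∃ t : ℝ, 0 < t ∧ y - t • lift q ∈ coneOf P ∧ ∀ s, t < s → y - s • lift q ∉ coneOf P := by
  set T := Icc 0 (deg y) ∩ (fun s => y - s • lift q) ⁻¹' {x | x ∈ coneOf P ∧ deg x ≤ deg y}
  have hT : IsCompact T := isCompact_Icc.inter_right
    ((isCompact_setOf_mem_coneOf_deg_le hP _).isClosed.preimage (by fun_prop))
  have hmem : ∀ s, 0 ≤ s → y - s • lift q ∈ coneOf P → s ∈ T := by
    intro s hs hsC
    have := deg_nonneg_of_mem_coneOf hsC
    simp only [deg_sub, deg_smul, deg_lift, mul_one] at this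
    exact ⟨⟨hs, by linarith⟩, hsC, by simp only [deg_sub, deg_smul, deg_lift]; linarith⟩
  have h0C : (0 : Fin (m + 1) → ℝ) ∈ coneOf P := by simpa using smul_lift_mem_coneOf le_rfl hq
  obtain ⟨t, ⟨⟨ht, -⟩, htC, -⟩, htmax⟩ :=
    hT.exists_isGreatest ⟨0, hmem 0 le_rfl (by simpa using intrinsicInterior_subset hy)⟩
  have hdir : (0 : Fin (m + 1) → ℝ) -ᵥ lift q ∈ (affineSpan ℝ (coneOf P)).direction :=
    AffineSubspace.vsub_mem_direction (subset_affineSpan ℝ _ h0C)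
      (subset_affineSpan ℝ _ (lift_mem_coneOf hq))
  obtain ⟨ε, hεC, hε⟩ := (((eventually_add_smul_mem_of_mem_intrinsicInterior hy hdir).filter_mono
    nhdsWithin_le_nhds).and self_mem_nhdsWithin).exists (f := 𝓝[>] (0 : ℝ))
  simp only [vsub_eq_sub, zero_sub, smul_neg, ← sub_eq_add_neg] at hεC
  exact ⟨t, (show (0 : ℝ) < ε from hε).trans_le (htmax (hmem ε (le_of_lt hε) hεC)), htC,
    fun s hts hsC => (htmax (hmem s (ht.trans hts.le) hsC)).not_gt hts⟩

end Caratheodory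

section SimplexRep

variable {m : ℕ} {P : Set (Fin m → ℝ)} {y : Fin (m + 1) → ℝ} {n : ℕ}

structure SimplexRep (P : Set (Fin m → ℝ)) (y : Fin (m + 1) → ℝ) (v : Fin (n + 1) → Fin m → ℝ)
    (c : Fin (n + 1) → ℝ) : Prop where
  linearIndependent : LinearIndependent ℝ (lift ∘ v)
  mem : ∀ i, v i ∈ P
  lattice : ∀ i, isLat (v i)
  mem_intrinsicInterior : v 0 ∈ intrinsicInterior ℝ P
  pos : 0 < c 0
  nonneg : ∀ i, 0 ≤ c i
  eq_sum : y = ∑ i, c i • lift (v i)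

lemma exists_simplexRep {V : Set (Fin m → ℝ)} (hV : V.Finite) (hVlat : ∀ p ∈ V, isLat p)
    (hP : P = convexHull ℝ V) {q : Fin m → ℝ} (hq : q ∈ intrinsicInterior ℝ P) (hqlat : isLat q)
    (hy : y ∈ intrinsicInterior ℝ (coneOf P)) :
    ∃ (n : ℕ) (v : Fin (n + 1) → Fin m → ℝ) (c : Fin (n + 1) → ℝ), SimplexRep P y v c := by
  have hqP := intrinsicInterior_subset hq
  have hconv : Convex ℝ P := hP ▸ convex_convexHull ℝ V
  obtain ⟨t, ht, htC, htmax⟩ :=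
    exists_max_sub_smul_lift_mem_coneOf (hP ▸ hV.isCompact_convexHull ℝ) hqP hy
  obtain ⟨n, z, κ, hzV, hz, hκ, hyz⟩ := exists_linearIndependent_of_mem_coneOf_convexHull (hP ▸ htC)
  have hzP : ∀ i, z i ∈ P := fun i => hP ▸ subset_convexHull ℝ V (hzV i)
  -- maximality of `t` keeps `lift q` out of the span of the other generators
  have hq_span : lift q ∉ Submodule.span ℝ (range (lift ∘ z)) := by
    rw [Submodule.mem_span_range_iff_exists_fun]
    rintro ⟨γ, hγ⟩
    have hsmall : ∀ᶠ ε in 𝓝 (0 : ℝ), ∀ i, 0 ≤ κ i - ε * γ i := by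
      refine eventually_all.2 fun i => ?_
      have hc : Continuous fun ε : ℝ => κ i - ε * γ i := by fun_prop
      have : Tendsto (fun ε : ℝ => κ i - ε * γ i) (𝓝 0) (𝓝 (κ i)) := by
        simpa using hc.tendsto 0
      exact (this.eventually_const_lt (hκ i)).mono fun ε h => h.le
    obtain ⟨ε, hεκ, hε⟩ :=
      ((hsmall.filter_mono nhdsWithin_le_nhds).and self_mem_nhdsWithin).exists (f := 𝓝[>] 0)
    refine htmax (t + ε) (lt_add_of_pos_right t hε) ?_
    have : y - (t + ε) • lift q = ∑ i, (κ i - ε * γ i) • lift (z i) := by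
      rw [add_smul, ← sub_sub, hyz, ← hγ]
      simp [sub_smul, Finset.sum_sub_distrib, Finset.smul_sum, smul_smul]
    rw [this]
    exact sum_smul_lift_mem_coneOf hconv ⟨q, hqP⟩ hεκ hzP
  refine ⟨n, Fin.cons q z, Fin.cons t κ, ⟨?_, Fin.cases hqP hzP,
    Fin.cases hqlat fun i => hVlat _ (hzV i), hq, ht, Fin.cases ht.le fun i => (hκ i).le, ?_⟩⟩
  · rw [Fin.comp_cons]
    exact linearIndependent_finCons.2 ⟨hz, hq_span⟩
  · simp [Fin.sum_univ_succ, ← hyz]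

lemma SimplexRep.le_finrank {v : Fin (n + 1) → Fin m → ℝ} {c : Fin (n + 1) → ℝ}
    (h : SimplexRep P y v c) : n ≤ Module.finrank ℝ (vectorSpan ℝ P) := by
  have hcard := (linearIndependent_lift_iff.1 h.linearIndependent).card_le_finrank_succ
  have hmono := Submodule.finrank_mono (vectorSpan_mono ℝ (range_subset_iff.2 h.mem))
  rw [Fintype.card_fin] at hcard
  omega

end SimplexRep

section Exchange

lemma sum_smul_update_eq_of_eq_sum {ι R M : Type*} [Fintype ι] [DecidableEq ι] [Semiring R]
    [AddCommMonoid M] [Module R M] {w : ι → M} {u : M} {μ : ι → R} (hu : u = ∑ i, μ i • w i)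
    (a : ι → R) (k : ι) :
    ∑ i, a i • Function.update w k u i = ∑ i, (Function.update a k 0 + a k • μ) i • w i := by
  simp only [Pi.add_apply, Pi.smul_apply, smul_eq_mul, add_smul, Finset.sum_add_distrib,
    ← smul_smul, ← Finset.smul_sum, ← hu]
  rw [Fintype.sum_eq_add_sum_compl k, Fintype.sum_eq_add_sum_compl k]
  simp only [Function.update_self, zero_smul, zero_add, add_comm]
  congr 1
  refine Finset.sum_congr rfl fun i hi => ?_
  rw [Finset.mem_compl, Finset.mem_singleton] at hi
  simp [Function.update_of_ne hi]

lemma exists_of_mem_convexHull_range {ι E : Type*} [Fintype ι] [AddCommGroup E] [Module ℝ E]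
    {v : ι → E} {x : E} (hx : x ∈ convexHull ℝ (range v)) :
    ∃ w : ι → ℝ, (∀ i, 0 ≤ w i) ∧ ∑ i, w i = 1 ∧ ∑ i, w i • v i = x := by
  classical
  refine convexHull_min (t := {x | ∃ w : ι → ℝ, (∀ i, 0 ≤ w i) ∧ ∑ i, w i = 1 ∧
    ∑ i, w i • v i = x}) ?_ ?_ hx
  · rintro _ ⟨i, rfl⟩
    exact ⟨Pi.single i 1, (Pi.single_nonneg.2 zero_le_one : (0 : ι → ℝ) ≤ Pi.single i 1),
      by simp, by simp [Pi.single_apply]⟩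
  · rintro _ ⟨w, hw₀, hw₁, rfl⟩ _ ⟨w', hw₀', hw₁', rfl⟩ a b ha hb hab
    refine ⟨a • w + b • w', fun i => add_nonneg (mul_nonneg ha (hw₀ i)) (mul_nonneg hb (hw₀' i)),
      ?_, ?_⟩
    · simp [Finset.sum_add_distrib, ← Finset.mul_sum, hw₁, hw₁', hab]
    · simp [add_smul, Finset.sum_add_distrib, Finset.smul_sum, smul_smul]

variable {m : ℕ}

lemma convexHull_range_update_subset {ι : Type*} [DecidableEq ι] {v : ι → Fin m → ℝ} {k : ι}
    {p : Fin m → ℝ} (hp : p ∈ convexHull ℝ (range v)) :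
    convexHull ℝ (range (Function.update v k p)) ⊆ convexHull ℝ (range v) := by
  refine convexHull_min (range_subset_iff.2 fun i => ?_) (convex_convexHull ℝ _)
  rcases eq_or_ne i k with rfl | hi
  · simpa using hp
  · simpa [hi] using subset_convexHull ℝ _ (mem_range_self i)

lemma notMem_convexHull_range_update {ι : Type*} [Fintype ι] [DecidableEq ι]
    {v : ι → Fin m → ℝ} (hv : LinearIndependent ℝ (lift ∘ v)) {p : Fin m → ℝ} {μ : ι → ℝ}
    (hμ₀ : ∀ i, 0 ≤ μ i) (hμ : lift p = ∑ i, μ i • lift (v i)) {k i₀ : ι} (hi₀ : i₀ ≠ k)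
    (hμi₀ : μ i₀ ≠ 0) : v k ∉ convexHull ℝ (range (Function.update v k p)) := by
  intro hmem
  obtain ⟨ν, hν₀, hν₁, hν⟩ := exists_of_mem_convexHull_range hmem
  have hsum : ∑ i, (Function.update ν k 0 + ν k • μ) i • lift (v i) =
      ∑ i, (Pi.single k 1 : ι → ℝ) i • lift (v i) := by
    simp_rw [← sum_smul_update_eq_of_eq_sum hμ, ← Function.apply_update (fun _ => lift),
      ← lift_sum_smul hν₁, hν, Pi.single_apply, ite_smul, one_smul, zero_smul,
      Finset.sum_ite_eq', Finset.mem_univ, if_true]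
  have hcoef := Fintype.linearIndependent_iffₛ.1 hv _ _ hsum
  have hk := hcoef k
  have hi := hcoef i₀
  simp only [Pi.add_apply, Function.update_self, Pi.smul_apply, smul_eq_mul, zero_add,
    Pi.single_eq_same, Function.update_of_ne hi₀, Pi.single_eq_of_ne hi₀] at hk hi
  have : ν k * μ i₀ = 0 := by nlinarith [hν₀ i₀, mul_nonneg (hν₀ k) (hμ₀ i₀)]
  rcases mul_eq_zero.1 this with h | h
  · simp [h] at hk
  · exact hμi₀ h

lemma setOf_isLat_convexHull_range_update_ssubset {ι : Type*} [Fintype ι] [DecidableEq ι]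
    {v : ι → Fin m → ℝ} (hv : LinearIndependent ℝ (lift ∘ v)) {k : ι} (hvk : isLat (v k))
    {p : Fin m → ℝ} (hp : p ∈ convexHull ℝ (range v)) {μ : ι → ℝ} (hμ₀ : ∀ i, 0 ≤ μ i)
    (hμ : lift p = ∑ i, μ i • lift (v i)) {i₀ : ι} (hi₀ : i₀ ≠ k) (hμi₀ : μ i₀ ≠ 0) :
    {x | x ∈ convexHull ℝ (range (Function.update v k p)) ∧ isLat x} ⊂
      {x | x ∈ convexHull ℝ (range v) ∧ isLat x} :=
  ⟨fun _ hx => ⟨convexHull_range_update_subset hp hx.1, hx.2⟩, fun hsub =>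
    notMem_convexHull_range_update hv hμ₀ hμ hi₀ hμi₀
      (hsub ⟨subset_convexHull ℝ _ (mem_range_self k), hvk⟩).1⟩

end Exchange

section Descent

variable {m : ℕ} {P : Set (Fin m → ℝ)} {y : Fin (m + 1) → ℝ} {n : ℕ}
  {v : Fin (n + 1) → Fin m → ℝ} {c : Fin (n + 1) → ℝ}

lemma SimplexRep.update (h : SimplexRep P y v c) {p : Fin m → ℝ} (hp : p ∈ P) (hplat : isLat p)
    {μ : Fin (n + 1) → ℝ} (hμ : lift p = ∑ i, μ i • lift (v i)) {k : Fin (n + 1)} (hk : μ k ≠ 0)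
    {σ : ℝ} (hσ : 0 ≤ σ) (hck : c k = σ * μ k) (hle : ∀ i, σ * μ i ≤ c i)
    (h₀ : 0 < Function.update (c - σ • μ) k σ 0)
    (hint : Function.update v k p 0 ∈ intrinsicInterior ℝ P) :
    SimplexRep P y (Function.update v k p) (Function.update (c - σ • μ) k σ) where
  linearIndependent := by
    rw [Function.comp_update]
    refine h.linearIndependent.update k (lift p) ⟨1, one_mem _,
      (Finsupp.linearEquivFunOnFinite ℝ ℝ _).symm μ, mem_nonZeroDivisors_of_ne_zero hk, ?_⟩
    rw [Finsupp.linearCombination_eq_fintype_linearCombination_apply,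
      Fintype.linearCombination_apply, one_smul, hμ]
    rfl
  mem := (Function.forall_update_iff _ fun _ x => x ∈ P).2 ⟨hp, fun i _ => h.mem i⟩
  lattice := (Function.forall_update_iff _ fun _ x => isLat x).2 ⟨hplat, fun i _ => h.lattice i⟩
  mem_intrinsicInterior := hint
  pos := h₀
  nonneg := (Function.forall_update_iff _ fun _ x => 0 ≤ x).2
    ⟨hσ, fun i _ => by simpa using hle i⟩
  eq_sum := by
    have hk0 : (c - σ • μ) k = 0 := by simp [hck]
    simp_rw [Function.apply_update (fun _ => lift), sum_smul_update_eq_of_eq_sum hμ,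
      Function.update_idem, Function.update_self, ← hk0, Function.update_eq_self,
      sub_add_cancel, h.eq_sum]

lemma SimplexRep.exists_lift_eq_sum_one_sub (h : SimplexRep P y v c) (hy : isLat y)
    (hn : (n : ℝ) - 1 < deg y) (h1 : 1 < deg y) (hc₀ : c 0 ≤ 1) (hc : ∀ i, c (Fin.succ i) < 1) :
    2 ≤ n ∧ ∃ p, isLat p ∧ lift p = ∑ i, (1 - c i) • lift (v i) := by
  have hdeg : deg y = c 0 + ∑ i : Fin n, c i.succ := by
    simpa [Fin.sum_univ_succ] using congrArg deg h.eq_sum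
  have hn₀ : n ≠ 0 := by
    rintro rfl
    simp only [Finset.univ_eq_empty, Finset.sum_empty, add_zero] at hdeg
    linarith
  have hlt : ∑ i : Fin n, c i.succ < n := by
    have : Nonempty (Fin n) := ⟨⟨0, Nat.pos_of_ne_zero hn₀⟩⟩
    simpa using Finset.sum_lt_sum_of_nonempty Finset.univ_nonempty fun i _ => hc i
  obtain ⟨N, hN⟩ := hy (Fin.last m)
  have hdeg_n : deg y = n := by
    rw [deg, hN] at hn hdeg ⊢
    have h₁ := Int.cast_lt.1 (show ((n - 1 : ℤ) : ℝ) < N by push_cast; linarith)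
    have h₂ := Int.cast_lt.1 (show (N : ℝ) < ((n + 1 : ℤ) : ℝ) by push_cast; linarith)
    have : N = n := by omega
    simp [this]
  refine ⟨by exact_mod_cast (hdeg_n ▸ h1 : (1 : ℝ) < n), ?_⟩
  have hu : ∑ i, lift (v i) - y = ∑ i, (1 - c i) • lift (v i) := by
    simp [sub_smul, Finset.sum_sub_distrib, h.eq_sum]
  have hlat : isLat (∑ i, lift (v i) - y) :=
    (latticeAddSubgroup _).sub_mem (sum_mem fun i _ => isLat_lift (h.lattice i)) hy
  refine ⟨Fin.init (∑ i, lift (v i) - y), isLat_init hlat, ?_⟩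
  rw [← hu]
  refine eq_of_deg_eq_of_init_eq ?_ (by simp)
  simp [hdeg_n]

lemma SimplexRep.exists_ssubset (hP : Convex ℝ P) (h : SimplexRep P y v c) (hy : isLat y)
    (hn : (n : ℝ) - 1 < deg y) (h1 : 1 < deg y) (hc₀ : c 0 ≤ 1) (hc : ∀ i, c (Fin.succ i) < 1) :
    ∃ (v' : Fin (n + 1) → Fin m → ℝ) (c' : Fin (n + 1) → ℝ), SimplexRep P y v' c' ∧
      {x | x ∈ convexHull ℝ (range v') ∧ isLat x} ⊂ {x | x ∈ convexHull ℝ (range v) ∧ isLat x} := by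
  obtain ⟨hn₂, p, hplat, hp⟩ := h.exists_lift_eq_sum_one_sub hy hn h1 hc₀ hc
  set μ : Fin (n + 1) → ℝ := fun i => 1 - c i
  have hμ₀ : ∀ i, 0 ≤ μ i := Fin.cases (sub_nonneg.2 hc₀) fun i => sub_nonneg.2 (hc i).le
  have hμ : ∀ i : Fin n, 0 < μ i.succ := fun i => sub_pos.2 (hc i)
  have hμ₁ : ∑ i, μ i = 1 := by
    have := congrArg deg hp
    simp only [deg_lift, deg_sum, deg_smul, mul_one] at this
    exact this.symm
  have hpv : p = ∑ i, μ i • v i := by simpa using congrArg Fin.init hp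
  have hpS : p ∈ convexHull ℝ (range v) :=
    mem_convexHull_of_exists_fintype μ v hμ₀ hμ₁ (fun i => mem_range_self i) hpv.symm
  have hpP : p ∈ P := convexHull_min (range_subset_iff.2 h.mem) hP hpS
  have hss := fun k i₀ => setOf_isLat_convexHull_range_update_ssubset h.linearIndependent
    (h.lattice k) hpS hμ₀ hp (i₀ := i₀)
  -- pivot at the vertex minimizing `c i / μ i`, preferring `v 0` on ties, so that the weight at
  -- index `0` stays positive
  have : Nonempty (Fin n) := ⟨⟨0, by omega⟩⟩
  obtain ⟨j, -, hj⟩ := Finset.exists_min_image Finset.univ (fun i : Fin n => c i.succ / μ i.succ)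
    Finset.univ_nonempty
  set σ := c j.succ / μ j.succ
  have hσ : ∀ i : Fin n, σ * μ i.succ ≤ c i.succ := fun i =>
    (le_div_iff₀ (hμ i)).1 (hj i (Finset.mem_univ _))
  by_cases hσ₀ : σ * μ 0 < c 0
  · obtain ⟨j', hj'⟩ := Fintype.exists_ne_of_one_lt_card (by rw [Fintype.card_fin]; omega) j
    refine ⟨_, _, h.update hpP hplat hp (hμ j).ne' (div_nonneg (h.nonneg _) (hμ j).le)
      (div_mul_cancel₀ _ (hμ j).ne').symm (Fin.cases hσ₀.le hσ) ?_ ?_,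
      hss j.succ j'.succ (Fin.succ_injective _ |>.ne hj') (hμ j').ne'⟩
    · simpa [Function.update_of_ne (Fin.succ_ne_zero j).symm] using hσ₀
    · simpa [Function.update_of_ne (Fin.succ_ne_zero j).symm] using h.mem_intrinsicInterior
  · rw [not_lt] at hσ₀
    have hμ0 : 0 < μ 0 := (hμ₀ 0).lt_of_ne fun h0 => by
      rw [← h0, mul_zero] at hσ₀
      exact hσ₀.not_gt h.pos
    have hσ₀' : c 0 / μ 0 ≤ σ := (div_le_iff₀ hμ0).2 hσ₀
    refine ⟨_, _, h.update hpP hplat hp hμ0.ne' (div_nonneg h.pos.le hμ0.le)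
      (div_mul_cancel₀ _ hμ0.ne').symm (Fin.cases (div_mul_cancel₀ _ hμ0.ne').le fun i =>
        (mul_le_mul_of_nonneg_right hσ₀' (hμ i).le).trans (hσ i)) ?_ ?_,
      hss 0 (Fin.succ ⟨0, by omega⟩) (Fin.succ_ne_zero _) (hμ _).ne'⟩
    · simpa using div_pos h.pos hμ0
    · simpa [hpv] using hP.sum_mem_intrinsicInterior hμ₀ hμ₁ hμ0 h.mem_intrinsicInterior h.mem

theorem SimplexRep.exists_sub_lift_mem_intrinsicInterior (hP : Convex ℝ P)
    (h : SimplexRep P y v c) (hy : isLat y) (hn : (n : ℝ) - 1 < deg y) (h1 : 1 < deg y) :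
    ∃ a ∈ P, isLat a ∧ y - lift a ∈ intrinsicInterior ℝ (coneOf P) := by
  induction hN : {x | x ∈ convexHull ℝ (range v) ∧ isLat x}.ncard using Nat.strong_induction_on
    generalizing v c with
  | _ N ih =>
  have hsub : ∀ i, (Pi.single i 1 : Fin (n + 1) → ℝ) ≤ c →
      (Pi.single i 1 : Fin (n + 1) → ℝ) 0 < c 0 →
      y - lift (v i) ∈ intrinsicInterior ℝ (coneOf P) := fun i hi hi₀ => by
    have := sum_smul_lift_mem_intrinsicInterior_coneOf hP h.mem_intrinsicInterior h.mem
      (c := c - Pi.single i 1) (sub_pos.2 hi₀) fun j => sub_nonneg.2 (hi j)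
    simpa [sub_smul, Finset.sum_sub_distrib, Pi.single_apply, ← h.eq_sum] using this
  by_cases hc₀ : 1 < c 0
  · refine ⟨v 0, h.mem 0, h.lattice 0, hsub 0 (fun j => ?_) (by simpa using hc₀)⟩
    rcases eq_or_ne j 0 with rfl | hj
    · simpa using hc₀.le
    · simpa [hj] using h.nonneg j
  by_cases hc : ∃ i : Fin n, 1 ≤ c i.succ
  · obtain ⟨i, hi⟩ := hc
    refine ⟨v i.succ, h.mem _, h.lattice _, hsub i.succ (fun j => ?_) (by simpa using h.pos)⟩
    rcases eq_or_ne j i.succ with rfl | hj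
    · simpa using hi
    · simpa [hj] using h.nonneg j
  simp only [not_lt, not_exists, not_le] at hc₀ hc
  obtain ⟨v', c', h', hss⟩ := h.exists_ssubset hP hy hn h1 hc₀ hc
  have hfin : {x | x ∈ convexHull ℝ (range v) ∧ isLat x}.Finite :=
    ((Set.finite_range v).isCompact_convexHull ℝ).isBounded.finite_setOf_isLat
  exact ih _ (hN ▸ Set.ncard_lt_ncard hss hfin) h' rfl

end Descent

lemma exists_decomp_deg_le_of_forall_sub_lift {m : ℕ} {P : Set (Fin m → ℝ)} {r : ℝ} (hr : 0 ≤ r)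
    (step : ∀ y ∈ Mstar P, r < deg y → ∃ a ∈ P, isLat a ∧ y - lift a ∈ Mstar P) :
    ∀ y ∈ Mstar P, ∃ z w, z ∈ Mstar P ∧ w ∈ Msemi P ∧ y = z + w ∧ deg z ≤ r := by
  intro y hy
  obtain ⟨N, hN⟩ := exists_nat_ge (deg y)
  induction N generalizing y with
  | zero => exact ⟨y, 0, hy, zero_mem _, (add_zero y).symm, by rw [Nat.cast_zero] at hN; linarith⟩
  | succ N ih =>
    by_cases hyr : deg y ≤ r
    · exact ⟨y, 0, hy, zero_mem _, (add_zero y).symm, hyr⟩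
    obtain ⟨a, haP, halat, ha⟩ := step y hy (not_le.1 hyr)
    obtain ⟨z, w, hz, hw, hzw, hzr⟩ :=
      ih _ ha (by push_cast at hN; rw [deg_sub, deg_lift]; linarith)
    refine ⟨z, w + lift a, hz, add_mem hw (AddSubmonoid.subset_closure ⟨a, haP, halat, rfl⟩), ?_,
      hzr⟩
    rw [← add_assoc, ← hzw, sub_add_cancel]

/-- a lattice polytope of dimension `d ≥ 2` with an interior lattice
point satisfies `rdeg y ≤ d - 1` for all `y ∈ M*(P)`. -/
theorem stmt7 {m d : ℕ} (hd : 2 ≤ d) (P : Set (Fin m → ℝ)) (V : Set (Fin m → ℝ))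
    (hV : V.Finite) (hVlat : ∀ p ∈ V, isLat p) (hP : P = convexHull ℝ V)
    (hdim : Module.finrank ℝ (vectorSpan ℝ P) = d)
    (hint : ∃ p ∈ intrinsicInterior ℝ P, isLat p) :
    ∀ y ∈ Mstar P, ∃ z w, z ∈ Mstar P ∧ w ∈ Msemi P ∧ y = z + w ∧
      deg z ≤ (d : ℝ) - 1 := by
  obtain ⟨q, hq, hqlat⟩ := hint
  have hd' : (2 : ℝ) ≤ d := by exact_mod_cast hd
  refine exists_decomp_deg_le_of_forall_sub_lift (by linarith) fun y hy hdeg => ?_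
  obtain ⟨n, v, c, h⟩ := exists_simplexRep hV hVlat hP hq hqlat hy.1
  have hn : (n : ℝ) ≤ d := by exact_mod_cast hdim ▸ h.le_finrank
  obtain ⟨a, haP, halat, ha⟩ := h.exists_sub_lift_mem_intrinsicInterior
    (hP ▸ convex_convexHull ℝ V) hy.2 (by linarith) (by linarith)
  exact ⟨a, haP, halat, ha, (latticeAddSubgroup _).sub_mem hy.2 (isLat_lift halat)⟩
end
end

section
/- Let σ ⊂ ℝ^m be an empty non-unimodular lattice d-simplex with vertices v_0, ..., v_d. Then every element of M*(σ) = Int C(σ) ∩ ℤ^{m+1} can be written as z + w with z ∈ M*(σ) of degree at most d − 1 and w ∈ C(σ) ∩ ℤ^{m+1}. (Here decompositions use the full monoid C(σ) ∩ ℤ^{m+1}, not just M(σ).) -/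
open Set

noncomputable section

/-!
Write `y = ∑ λᵢ (vᵢ, 1)` with all `λᵢ > 0`. Subtracting integer multiples of the generators
moves coefficients into `(0, 1]`; this is applied to the `λᵢ` if one of them is not an integer,
and otherwise to the coefficients of a lattice point of `C(σ)` outside the monoid spanned by the
`(vᵢ, 1)` (it exists by non-unimodularity), using `λᵢ ≥ 1`. The result `z = ∑ γᵢ (vᵢ, 1)` is an
interior lattice point with `y - z ∈ C(σ)`, and its degree `∑ γᵢ` is an integer `< d + 1`
because some `γⱼ < 1`. It is not `d` either: otherwise `∑ (1 - γᵢ) (vᵢ, 1)` would be a lattice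
point of degree one with all coefficients in `[0, 1)`, i.e. a lattice point of `σ` that is not a
vertex.
-/

theorem intrinsicInterior_eq_interior_of_affineSpan_eq_top {V P : Type*} [AddCommGroup V]
    [Module ℝ V] [TopologicalSpace P] [AddTorsor V P] {s : Set P}
    (h : affineSpan ℝ s = ⊤) : intrinsicInterior ℝ s = interior s := by
  refine interior_subset_intrinsicInterior.antisymm' ?_
  have hopen : IsOpen (affineSpan ℝ s : Set P) := by simp [h]
  exact (hopen.isOpenMap_subtype_val.image_interior_subset _).trans
    (interior_mono (image_preimage_subset _ _))

theorem LinearMap.intrinsicInterior_image_of_injective {E F : Type*} [NormedAddCommGroup E]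
    [NormedSpace ℝ E] [FiniteDimensional ℝ E] [NormedAddCommGroup F] [NormedSpace ℝ F]
    (A : E →ₗ[ℝ] F) (hA : Function.Injective A) (s : Set E) :
    intrinsicInterior ℝ (A '' s) = A '' intrinsicInterior ℝ s := by
  let e := LinearEquiv.ofInjective A hA
  have hA_eq : ⇑A = (LinearMap.range A).subtypeₗᵢ ∘ e := rfl
  rw [hA_eq, image_comp, image_comp,
    ← (LinearMap.range A).subtypeₗᵢ.coe_toAffineIsometry, AffineIsometry.intrinsicInterior_image,
    ← e.coe_toAffineEquiv, AffineEquiv.intrinsicInterior_image]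

theorem intrinsicInterior_Ici_zero {ι : Type*} [Fintype ι] :
    intrinsicInterior ℝ (Ici (0 : ι → ℝ)) = {a | ∀ i, 0 < a i} := by
  have hint : interior (Ici (0 : ι → ℝ)) = {a | ∀ i, 0 < a i} := by
    rw [← pi_univ_Ici, interior_pi_set finite_univ]
    ext a
    simp
  rw [intrinsicInterior_eq_interior_of_affineSpan_eq_top, hint]
  refine affineSpan_eq_top_of_nonempty_interior ?_
  rw [(convex_Ici 0).convexHull_eq, hint]
  exact ⟨fun _ => 1, fun _ => one_pos⟩

theorem exists_nonneg_smul_mem_stdSimplex {ι : Type*} [Fintype ι] [Nonempty ι] {a : ι → ℝ}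
    (ha : 0 ≤ a) : ∃ c : ℝ, 0 ≤ c ∧ ∃ w ∈ stdSimplex ℝ ι, a = c • w := by
  classical
  obtain hsum | hsum := (Finset.sum_nonneg fun i _ => ha i : (0 : ℝ) ≤ ∑ i, a i).eq_or_lt
  · refine ⟨0, le_rfl, Pi.single (Classical.arbitrary ι) 1, single_mem_stdSimplex ℝ _, ?_⟩
    rw [zero_smul]
    funext i
    exact (Finset.sum_eq_zero_iff_of_nonneg fun i _ => ha i).1 hsum.symm i (Finset.mem_univ i)
  · refine ⟨∑ i, a i, hsum.le, (∑ i, a i)⁻¹ • a, ⟨fun i => ?_, ?_⟩, ?_⟩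
    · exact smul_nonneg (inv_nonneg.2 hsum.le) (ha i)
    · simp [← Finset.mul_sum, hsum.ne']
    · rw [smul_smul, mul_inv_cancel₀ hsum.ne', one_smul]

theorem convexHull_range_eq_image_stdSimplex {ι E : Type*} [Fintype ι] [AddCommGroup E]
    [Module ℝ E] (v : ι → E) :
    convexHull ℝ (range v) = Fintype.linearCombination ℝ v '' stdSimplex ℝ ι := by
  classical
  rw [← convexHull_rangle_single_eq_stdSimplex, LinearMap.image_convexHull, ← range_comp]
  congr 2
  funext i
  simp

theorem exists_ne_ceil_of_forall_ne_natCast {ι : Type*} {a : ι → ℝ} (ha : 0 ≤ a)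
    (h : ∀ n : ι → ℕ, a ≠ fun i => (n i : ℝ)) : ∃ j, a j ≠ ⌈a j⌉ := by
  by_contra! hceil
  refine h (fun i => ⌈a i⌉.toNat) (funext fun i => ?_)
  rw [hceil i, Int.ceil_intCast]
  exact_mod_cast (Int.toNat_of_nonneg (Int.ceil_nonneg (ha i))).symm

def latticeSubgroup (n : ℕ) : AddSubgroup (Fin n → ℝ) where
  carrier := {x | isLat x}
  add_mem' {x y} hx hy i := by
    obtain ⟨a, ha⟩ := hx i
    obtain ⟨b, hb⟩ := hy i
    exact ⟨a + b, by simp [ha, hb]⟩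
  zero_mem' _ := ⟨0, by simp⟩
  neg_mem' {x} hx i := by
    obtain ⟨a, ha⟩ := hx i
    exact ⟨-a, by simp [ha]⟩

theorem isLat_sub {n : ℕ} {x y : Fin n → ℝ} (hx : isLat x) (hy : isLat y) : isLat (x - y) :=
  (latticeSubgroup n).sub_mem hx hy

section LiftedSimplex

variable {m : ℕ}

@[simp]
theorem lift_castSucc (x : Fin m → ℝ) (i : Fin m) : lift x i.castSucc = x i :=
  Fin.snoc_castSucc ..

@[simp]
theorem lift_last (x : Fin m → ℝ) : lift x (Fin.last m) = 1 :=
  Fin.snoc_last ..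

theorem isLat_lift_iff {x : Fin m → ℝ} : isLat (lift x) ↔ isLat x := by
  refine ⟨fun h i => by simpa using h i.castSucc, fun h j => ?_⟩
  induction j using Fin.lastCases with
  | last => exact ⟨1, by simp⟩
  | cast i => simpa using h i

variable {ι : Type*} [Fintype ι] (v : ι → Fin m → ℝ)

theorem sum_smul_lift (a : ι → ℝ) :
    ∑ i, a i • lift (v i) = Fin.snoc (∑ i, a i • v i) (∑ i, a i) := by
  funext j
  induction j using Fin.lastCases with
  | last => simp [Finset.sum_apply]
  | cast i => simp [Finset.sum_apply]

theorem deg_sum_smul_lift (a : ι → ℝ) : deg (∑ i, a i • lift (v i)) = ∑ i, a i := by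
  simp [deg, Finset.sum_apply]

theorem lift_sum_smul_s11 {a : ι → ℝ} (ha : ∑ i, a i = 1) :
    lift (∑ i, a i • v i) = ∑ i, a i • lift (v i) := by
  rw [sum_smul_lift, ha, lift]

theorem sum_smul_lift_sub (a b : ι → ℝ) :
    ∑ i, (a i - b i) • lift (v i) = ∑ i, a i • lift (v i) - ∑ i, b i • lift (v i) := by
  simp only [sub_smul, Finset.sum_sub_distrib]

variable {v}

theorem linearIndependent_lift (hv : AffineIndependent ℝ v) :
    LinearIndependent ℝ fun i => lift (v i) := by
  refine Fintype.linearIndependent_iff.2 fun a ha => ?_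
  rw [sum_smul_lift] at ha
  have hsum : ∑ i, a i = 0 := by simpa using congrFun ha (Fin.last m)
  have hvec : ∑ i, a i • v i = 0 := funext fun j => by simpa using congrFun ha j.castSucc
  exact fun i => hv.eq_zero_of_sum_eq_zero hsum hvec i (Finset.mem_univ i)

theorem isLat_sum_intCast_smul_lift (hvlat : ∀ i, isLat (v i)) (k : ι → ℤ) :
    isLat (∑ i, (k i : ℝ) • lift (v i)) :=
  (latticeSubgroup _).sum_mem fun i _ => by
    rw [Int.cast_smul_eq_zsmul]
    exact (latticeSubgroup _).zsmul_mem (isLat_lift_iff.2 (hvlat i)) _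

theorem exists_coeffs_mem_Ioc_of_ne_ceil (hvlat : ∀ i, isLat (v i)) {a : ι → ℝ}
    (ha : isLat (∑ i, a i • lift (v i))) {j : ι} (hj : a j ≠ ⌈a j⌉) :
    ∃ γ : ι → ℝ, (∀ i, 0 < γ i ∧ γ i ≤ 1 ∧ (0 < a i → γ i ≤ a i)) ∧ γ j < 1 ∧
      isLat (∑ i, γ i • lift (v i)) := by
  refine ⟨fun i => a i - (⌈a i⌉ - 1), fun i => ⟨?_, ?_, fun hai => ?_⟩, ?_, ?_⟩
  · linarith [Int.ceil_lt_add_one (a i)]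
  · linarith [Int.le_ceil (a i)]
  · have : (1 : ℝ) ≤ ⌈a i⌉ := by exact_mod_cast Int.ceil_pos.2 hai
    linarith
  · linarith [(Int.le_ceil (a j)).lt_of_ne hj]
  · have hk := isLat_sum_intCast_smul_lift hvlat fun i => ⌈a i⌉ - 1
    push_cast at hk
    rw [sum_smul_lift_sub]
    exact isLat_sub ha hk

theorem not_isLat_sum_smul_lift (hv : AffineIndependent ℝ v)
    (hempty : ∀ p ∈ convexHull ℝ (range v), isLat p → p ∈ range v) {β : ι → ℝ}
    (hβ0 : ∀ i, 0 ≤ β i) (hβ1 : ∀ i, β i < 1) (hβsum : ∑ i, β i = 1) :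
    ¬ isLat (∑ i, β i • lift (v i)) := by
  classical
  intro hlat
  rw [← lift_sum_smul_s11 v hβsum, isLat_lift_iff] at hlat
  have hmem : ∑ i, β i • v i ∈ convexHull ℝ (range v) := by
    rw [convexHull_range_eq_image_stdSimplex]
    exact ⟨β, ⟨hβ0, hβsum⟩, Fintype.linearCombination_apply ℝ v β⟩
  obtain ⟨j, hj⟩ := hempty _ hmem hlat
  have hβj := hv.eq_of_sum_eq_sum (s := Finset.univ) (w₁ := Pi.single j 1) (w₂ := β)
    (by simp [hβsum]) (by simp [hj]) j (Finset.mem_univ j)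
  simp only [Pi.single_eq_same] at hβj
  exact (hβ1 j).ne' hβj

theorem sum_le_card_sub_two (hv : AffineIndependent ℝ v) (hvlat : ∀ i, isLat (v i))
    (hempty : ∀ p ∈ convexHull ℝ (range v), isLat p → p ∈ range v) {γ : ι → ℝ}
    (hγ0 : ∀ i, 0 < γ i) (hγ1 : ∀ i, γ i ≤ 1) (hlt : ∃ j, γ j < 1)
    (hlat : isLat (∑ i, γ i • lift (v i))) :
    ∑ i, γ i ≤ Fintype.card ι - 2 := by
  obtain ⟨k, hk⟩ : ∃ k : ℤ, ∑ i, γ i = k :=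
    (hlat (Fin.last m)).imp fun _ hk => (deg_sum_smul_lift v γ).symm.trans hk
  have hk_lt : (k : ℝ) < Fintype.card ι := by
    obtain ⟨j, hj⟩ := hlt
    simpa [hk] using Finset.sum_lt_sum (fun i _ => hγ1 i) ⟨j, Finset.mem_univ j, hj⟩
  have hk_ne : (k : ℝ) ≠ Fintype.card ι - 1 := by
    intro hk_eq
    refine not_isLat_sum_smul_lift hv hempty (β := fun i => 1 - γ i)
      (fun i => sub_nonneg.2 (hγ1 i)) (fun i => sub_lt_self 1 (hγ0 i)) ?_ ?_
    · rw [Finset.sum_sub_distrib, hk, hk_eq]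
      simp
    · rw [sum_smul_lift_sub]
      simpa using isLat_sub (isLat_sum_intCast_smul_lift hvlat 1) hlat
  have hk_int : k ≤ Fintype.card ι - 2 := by
    have h1 : k < Fintype.card ι := by exact_mod_cast hk_lt
    have h2 : k ≠ Fintype.card ι - 1 := fun h => hk_ne (by exact_mod_cast h)
    omega
  rw [hk]
  exact_mod_cast hk_int

variable [Nonempty ι]

theorem coneOf_convexHull_range :
    coneOf (convexHull ℝ (range v)) =
      Fintype.linearCombination ℝ (fun i => lift (v i)) '' Ici 0 := by
  ext y
  simp only [coneOf, convexHull_range_eq_image_stdSimplex, mem_image,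
    Fintype.linearCombination_apply, mem_ofPred_eq]
  constructor
  · rintro ⟨c, -, hc, ⟨w, hw, rfl⟩, rfl⟩
    refine ⟨c • w, mem_Ici.2 (smul_nonneg hc hw.1), ?_⟩
    simp [lift_sum_smul_s11 v hw.2, Finset.smul_sum, smul_smul]
  · rintro ⟨a, ha, rfl⟩
    obtain ⟨c, hc, w, hw, rfl⟩ := exists_nonneg_smul_mem_stdSimplex ha
    refine ⟨c, _, hc, ⟨w, hw, rfl⟩, ?_⟩
    simp [lift_sum_smul_s11 v hw.2, Finset.smul_sum, smul_smul]

theorem mem_coneOf_convexHull_range {y : Fin (m + 1) → ℝ} :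
    y ∈ coneOf (convexHull ℝ (range v)) ↔ ∃ a : ι → ℝ, 0 ≤ a ∧ ∑ i, a i • lift (v i) = y := by
  simp [coneOf_convexHull_range, Fintype.linearCombination_apply]

theorem mem_intrinsicInterior_coneOf (hv : AffineIndependent ℝ v) {y : Fin (m + 1) → ℝ} :
    y ∈ intrinsicInterior ℝ (coneOf (convexHull ℝ (range v))) ↔
      ∃ a : ι → ℝ, (∀ i, 0 < a i) ∧ ∑ i, a i • lift (v i) = y := by
  rw [coneOf_convexHull_range, LinearMap.intrinsicInterior_image_of_injective _
    (linearIndependent_lift hv).fintypeLinearCombination_injective, intrinsicInterior_Ici_zero]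
  simp [Fintype.linearCombination_apply]

theorem exists_coeffs_mem_Ioc_le (hvlat : ∀ i, isLat (v i))
    (hnu : ∃ x, isLat x ∧ x ∈ coneOf (convexHull ℝ (range v)) ∧
      ∀ n : ι → ℕ, x ≠ ∑ i, (n i : ℝ) • lift (v i))
    {c : ι → ℝ} (hc_pos : ∀ i, 0 < c i) (hy : isLat (∑ i, c i • lift (v i))) :
    ∃ γ : ι → ℝ, (∀ i, 0 < γ i ∧ γ i ≤ 1 ∧ γ i ≤ c i) ∧ (∃ j, γ j < 1) ∧
      isLat (∑ i, γ i • lift (v i)) := by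
  by_cases hfrac : ∃ j, c j ≠ ⌈c j⌉
  · obtain ⟨j, hj⟩ := hfrac
    obtain ⟨γ, hγ, hγj, hγlat⟩ := exists_coeffs_mem_Ioc_of_ne_ceil hvlat hy hj
    exact ⟨γ, fun i => ⟨(hγ i).1, (hγ i).2.1, (hγ i).2.2 (hc_pos i)⟩, ⟨j, hγj⟩, hγlat⟩
  · have hc_one : ∀ i, 1 ≤ c i := fun i => by
      rw [not_not.1 (not_exists.1 hfrac i)]
      exact_mod_cast Int.ceil_pos.2 (hc_pos i)
    obtain ⟨x, hxlat, hxcone, hxnat⟩ := hnu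
    obtain ⟨a, ha0, rfl⟩ := mem_coneOf_convexHull_range.1 hxcone
    obtain ⟨j, hj⟩ := exists_ne_ceil_of_forall_ne_natCast ha0 fun n hn => hxnat n (by rw [hn])
    obtain ⟨γ, hγ, hγj, hγlat⟩ := exists_coeffs_mem_Ioc_of_ne_ceil hvlat hxlat hj
    exact ⟨γ, fun i => ⟨(hγ i).1, (hγ i).2.1, (hγ i).2.1.trans (hc_one i)⟩, ⟨j, hγj⟩, hγlat⟩

end LiftedSimplex

/-- for an empty non-unimodular lattice `d`-simplex, every `y ∈ M*(σ)`
decomposes as `z + w` with `z ∈ M*(σ)` of degree at most `d - 1` and `w` a lattice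
point of the full cone `C(σ)`. -/
theorem stmt11 {m d : ℕ} (σ : Set (Fin m → ℝ)) (v : Fin (d + 1) → (Fin m → ℝ))
    (hv : AffineIndependent ℝ v) (hvlat : ∀ i, isLat (v i))
    (hσ : σ = convexHull ℝ (Set.range v))
    (hempty : ∀ p ∈ σ, isLat p → p ∈ Set.range v)
    (hnu : ∃ y, isLat y ∧ y ∈ coneOf σ ∧
      ∀ a : Fin (d + 1) → ℕ, y ≠ ∑ i, (a i : ℝ) • lift (v i)) :
    ∀ y ∈ Mstar σ, ∃ z w, z ∈ Mstar σ ∧ isLat w ∧ w ∈ coneOf σ ∧ y = z + w ∧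
      deg z ≤ (d : ℝ) - 1 := by
  subst hσ
  rintro y ⟨hy_int, hy_lat⟩
  obtain ⟨c, hc_pos, rfl⟩ := (mem_intrinsicInterior_coneOf hv).1 hy_int
  obtain ⟨γ, hγ, hlt, hγ_lat⟩ := exists_coeffs_mem_Ioc_le hvlat hnu hc_pos hy_lat
  refine ⟨∑ i, γ i • lift (v i), ∑ i, (c i - γ i) • lift (v i),
    ⟨(mem_intrinsicInterior_coneOf hv).2 ⟨γ, fun i => (hγ i).1, rfl⟩, hγ_lat⟩, ?_,
    mem_coneOf_convexHull_range.2 ⟨c - γ, fun i => sub_nonneg.2 (hγ i).2.2, rfl⟩, ?_, ?_⟩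
  · rw [sum_smul_lift_sub]
    exact isLat_sub hy_lat hγ_lat
  · rw [sum_smul_lift_sub, add_sub_cancel]
  · have hdeg := sum_le_card_sub_two hv hvlat hempty (fun i => (hγ i).1) (fun i => (hγ i).2.1)
      hlt hγ_lat
    rw [deg_sum_smul_lift]
    rw [Fintype.card_fin, Nat.cast_add, Nat.cast_one] at hdeg
    linarith
end
end
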